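/- arXiv:2011.13498 — 2 statements merged into one kernel-verified Lean document; each statement's English description precedes it below -/
import Mathlib

section
/- For every α, β ∈ [0,1), every S ≤ s ≤ t ≤ T with u = (s+t)/2, one has (u−S)^{−α}(T−u)^{−β}(t−s) ≤ 2^{1+α} ∫_s^t (r−S)^{−α}(T−r)^{−β} dr. -/
open MeasureTheory

/-!
On the right half `[u, t]` of `[s, t]` one has `r - S ≤ t - S ≤ 2 (u - S)` and `T - r ≤ T - u`, so,
both exponents being nonpositive, the weight is at least `2^(-α) (u - S)^(-α) (T - u)^(-β)` there.
Integrating this over `[u, t]`, whose length is `(t - s) / 2`, and discarding the nonnegative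
contribution of `[s, u]` gives the bound.
-/

open Set

theorem mul_sub_le_intervalIntegral_of_le_on_Icc {f : ℝ → ℝ} {a m b c : ℝ}
    (ham : a ≤ m) (hmb : m ≤ b) (hfi : IntervalIntegrable f volume a b)
    (hf_nonneg : ∀ x ∈ Icc a b, 0 ≤ f x) (hc : ∀ x ∈ Icc m b, c ≤ f x) :
    c * (b - m) ≤ ∫ x in a..b, f x := by
  have hfi_right : IntervalIntegrable f volume m b :=
    hfi.mono_set (by simp only [uIcc_of_le hmb, uIcc_of_le (ham.trans hmb)]; gcongr)
  calc c * (b - m) = ∫ _ in m..b, c := by simp [mul_comm]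
    _ ≤ ∫ x in m..b, f x := intervalIntegral.integral_mono_on hmb intervalIntegrable_const
        hfi_right hc
    _ ≤ ∫ x in a..b, f x := by
      refine intervalIntegral.integral_mono_interval ham hmb le_rfl ?_ hfi
      filter_upwards [ae_restrict_mem measurableSet_Ioc] with x hx
      exact hf_nonneg x (Ioc_subset_Icc_self hx)

theorem continuousOn_sub_rpow_mul_sub_rpow (α β : ℝ) {S s t T : ℝ} (hSs : S < s) (htT : t < T) :
    ContinuousOn (fun r => (r - S) ^ (-α) * (T - r) ^ (-β)) (Icc s t) := by
  refine ContinuousOn.mul ?_ ?_ <;> refine ContinuousOn.rpow_const (by fun_prop) ?_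
  · exact fun r hr => Or.inl (by linarith [hr.1])
  · exact fun r hr => Or.inl (by linarith [hr.2])

theorem sub_rpow_mul_sub_rpow_nonneg (α β : ℝ) {S r T : ℝ} (hSr : S ≤ r) (hrT : r ≤ T) :
    0 ≤ (r - S) ^ (-α) * (T - r) ^ (-β) :=
  mul_nonneg (Real.rpow_nonneg (by linarith) _) (Real.rpow_nonneg (by linarith) _)

theorem rpow_mul_rpow_le_of_mem_Icc {α β S u r t T : ℝ} (hα : 0 ≤ α) (hβ : 0 ≤ β)
    (hSu : S < u) (htT : t < T) (ht : t - S ≤ 2 * (u - S)) (hr : r ∈ Icc u t) :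
    (2 * (u - S)) ^ (-α) * (T - u) ^ (-β) ≤ (r - S) ^ (-α) * (T - r) ^ (-β) := by
  obtain ⟨hur, hrt⟩ := hr
  exact mul_le_mul
    (Real.rpow_le_rpow_of_nonpos (by linarith) (by linarith) (by linarith))
    (Real.rpow_le_rpow_of_nonpos (by linarith) (by linarith) (by linarith))
    (Real.rpow_nonneg (by linarith) _) (Real.rpow_nonneg (by linarith) _)

theorem midpoint_weight_integral_bound_general
    (α β S s t T : ℝ) (hα0 : 0 ≤ α) (hβ0 : 0 ≤ β)
    (hSs : S < s) (hst : s ≤ t) (htT : t < T) :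
    ((s + t) / 2 - S) ^ (-α) * (T - (s + t) / 2) ^ (-β) * (t - s) ≤
      (2 : ℝ) ^ (1 + α) * ∫ r in s..t, (r - S) ^ (-α) * (T - r) ^ (-β) := by
  set u := (s + t) / 2 with hu
  have hSu : S < u := by linarith
  have h_right_half : (2 * (u - S)) ^ (-α) * (T - u) ^ (-β) * (t - u) ≤
      ∫ r in s..t, (r - S) ^ (-α) * (T - r) ^ (-β) :=
    mul_sub_le_intervalIntegral_of_le_on_Icc (by linarith) (by linarith)
      ((continuousOn_sub_rpow_mul_sub_rpow α β hSs htT).intervalIntegrable_of_Icc hst)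
      (fun r hr => sub_rpow_mul_sub_rpow_nonneg α β (by linarith [hr.1]) (by linarith [hr.2]))
      (fun r hr => rpow_mul_rpow_le_of_mem_Icc hα0 hβ0 hSu htT (by linarith) hr)
  have h_two_pow : (2 : ℝ) ^ (1 + α) * 2 ^ (-α) = 2 := by
    rw [← Real.rpow_add two_pos]; norm_num
  calc (u - S) ^ (-α) * (T - u) ^ (-β) * (t - s)
      = 2 ^ (1 + α) * ((2 * (u - S)) ^ (-α) * (T - u) ^ (-β) * (t - u)) := by
        rw [Real.mul_rpow zero_le_two (sub_nonneg.2 hSu.le), hu]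
        linear_combination (-((u - S) ^ (-α) * (T - u) ^ (-β) * (t - s) / 2)) * h_two_pow
    _ ≤ _ := by gcongr

/-- For every `α, β ∈ [0,1)`, every `S < s ≤ t < T` with `u = (s+t)/2`, one has
`(u−S)^(−α) * (T−u)^(−β) * (t−s) ≤ 2^(1+α) * ∫_s^t (r−S)^(−α) * (T−r)^(−β) dr`. -/
theorem midpoint_weight_integral_bound
    (α β S s t T : ℝ) (hα0 : 0 ≤ α) (hα1 : α < 1) (hβ0 : 0 ≤ β) (hβ1 : β < 1)
    (hSs : S < s) (hst : s ≤ t) (htT : t < T) :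
    ((s + t) / 2 - S) ^ (-α) * (T - (s + t) / 2) ^ (-β) * (t - s) ≤
      (2 : ℝ) ^ (1 + α) * ∫ r in s..t, (r - S) ^ (-α) * (T - r) ^ (-β) :=
  midpoint_weight_integral_bound_general α β S s t T hα0 hβ0 hSs hst htT
end

section
/- Let g_t be the Gaussian heat kernel on ℝ. For every α ∈ [0,1] there is a constant C = C(α) such that for all 0 < s ≤ t and x ∈ ℝ: ∫_ℝ |g_t(x−y) − g_s(x−y)| dy ≤ C s^{−α/2} (t−s)^{α/2}. -/
open MeasureTheory Real

/-- The Gaussian heat kernel on `ℝ` with variance `t`. -/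
noncomputable def heatKernel (t x : ℝ) : ℝ :=
  (2 * π * t) ^ (-(1 : ℝ) / 2) * Real.exp (-(x ^ 2) / (2 * t))

lemma hk_coef_eq {u : ℝ} (hu : 0 < u) :
    (2 * π * u) ^ (-(1 : ℝ) / 2) = (Real.sqrt (2 * π * u))⁻¹ := by
  have h2 : (0 : ℝ) < 2 * π * u := by positivity
  rw [show (-(1:ℝ)/2) = -(1/2 : ℝ) by norm_num, Real.rpow_neg h2.le,
    ← Real.sqrt_eq_rpow]

set_option maxHeartbeats 1000000 in
lemma gauss_integrable {u : ℝ} (hu : 0 < u) :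
    Integrable (fun y : ℝ => Real.exp (-(y ^ 2) / (2 * u))) := by
  have hb : (0 : ℝ) < (2 * u)⁻¹ := by positivity
  exact (integrable_exp_neg_mul_sq hb).congr
    (Filter.Eventually.of_forall fun y => congrArg Real.exp (by ring))

lemma gauss_integral {u : ℝ} (hu : 0 < u) :
    ∫ y : ℝ, Real.exp (-(y ^ 2) / (2 * u)) = Real.sqrt (2 * π * u) := by
  have h : ∀ y : ℝ, -(y ^ 2) / (2 * u) = -((2 * u)⁻¹) * y ^ 2 := by
    intro y; ring
  simp_rw [h]
  rw [integral_gaussian]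
  congr 1
  field_simp

lemma hk_integrable {u : ℝ} (hu : 0 < u) : Integrable (heatKernel u) := by
  unfold heatKernel
  exact (gauss_integrable hu).const_mul _

lemma hk_integral {u : ℝ} (hu : 0 < u) : ∫ y : ℝ, heatKernel u y = 1 := by
  unfold heatKernel
  rw [integral_const_mul, gauss_integral hu, hk_coef_eq hu,
    inv_mul_cancel₀ (by positivity)]

lemma hk_nonneg {u : ℝ} (hu : 0 < u) (y : ℝ) : 0 ≤ heatKernel u y := by
  unfold heatKernel
  rw [hk_coef_eq hu]
  positivity

/-- Key `L¹` bound: `∫ |g_t - g_s| ≤ 2 (√(2πt) - √(2πs)) / √(2πs)`. -/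
lemma hk_L1_diff {s t : ℝ} (hs : 0 < s) (hst : s ≤ t) :
    (∫ y : ℝ, |heatKernel t y - heatKernel s y|) ≤
      2 * (Real.sqrt (2 * π * t) - Real.sqrt (2 * π * s)) / Real.sqrt (2 * π * s) := by
  have ht : 0 < t := hs.trans_le hst
  set cs := (2 * π * s) ^ (-(1 : ℝ) / 2) with hcs
  set ct := (2 * π * t) ^ (-(1 : ℝ) / 2) with hct
  have hcs' : cs = (Real.sqrt (2 * π * s))⁻¹ := hk_coef_eq hs
  have hct' : ct = (Real.sqrt (2 * π * t))⁻¹ := hk_coef_eq ht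
  have hsqs : 0 < Real.sqrt (2 * π * s) := Real.sqrt_pos.2 (by positivity)
  have hsqt : 0 < Real.sqrt (2 * π * t) := Real.sqrt_pos.2 (by positivity)
  have hsqle : Real.sqrt (2 * π * s) ≤ Real.sqrt (2 * π * t) := by
    apply Real.sqrt_le_sqrt; nlinarith [pi_pos]
  have hc_le : ct ≤ cs := by
    rw [hcs', hct']; exact inv_anti₀ hsqs hsqle
  have hcs_pos : 0 < cs := by rw [hcs']; positivity
  -- pointwise bound
  have hpt : ∀ y : ℝ, |heatKernel t y - heatKernel s y| ≤
      (cs - ct) * Real.exp (-(y ^ 2) / (2 * t)) +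
        cs * (Real.exp (-(y ^ 2) / (2 * t)) - Real.exp (-(y ^ 2) / (2 * s))) := by
    intro y
    have hE : Real.exp (-(y ^ 2) / (2 * s)) ≤ Real.exp (-(y ^ 2) / (2 * t)) := by
      apply Real.exp_le_exp.2
      rw [neg_div, neg_div, neg_le_neg_iff]
      apply div_le_div_of_nonneg_left (by positivity) (by positivity) (by linarith)
    have hEpos : 0 < Real.exp (-(y ^ 2) / (2 * t)) := Real.exp_pos _
    unfold heatKernel
    rw [← hcs, ← hct]
    have : ct * Real.exp (-(y ^ 2) / (2 * t)) - cs * Real.exp (-(y ^ 2) / (2 * s)) =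
        -((cs - ct) * Real.exp (-(y ^ 2) / (2 * t))) +
          cs * (Real.exp (-(y ^ 2) / (2 * t)) - Real.exp (-(y ^ 2) / (2 * s))) := by ring
    rw [this]
    calc |_ + _| ≤ |-((cs - ct) * Real.exp (-(y ^ 2) / (2 * t)))| +
          |cs * (Real.exp (-(y ^ 2) / (2 * t)) - Real.exp (-(y ^ 2) / (2 * s)))| :=
        abs_add_le _ _
      _ = (cs - ct) * Real.exp (-(y ^ 2) / (2 * t)) +
          cs * (Real.exp (-(y ^ 2) / (2 * t)) - Real.exp (-(y ^ 2) / (2 * s))) := by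
        rw [abs_neg, abs_of_nonneg (by nlinarith), abs_of_nonneg (by nlinarith)]
  -- integrate
  have hint_t := gauss_integrable ht
  have hint_s := gauss_integrable hs
  have hintRHS : Integrable (fun y : ℝ =>
      (cs - ct) * Real.exp (-(y ^ 2) / (2 * t)) +
        cs * (Real.exp (-(y ^ 2) / (2 * t)) - Real.exp (-(y ^ 2) / (2 * s)))) :=
    ((hint_t.const_mul _).add ((hint_t.sub hint_s).const_mul _))
  have hintLHS : Integrable (fun y : ℝ => |heatKernel t y - heatKernel s y|) :=
    ((hk_integrable ht).sub (hk_integrable hs)).abs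
  calc (∫ y : ℝ, |heatKernel t y - heatKernel s y|)
      ≤ ∫ y : ℝ, ((cs - ct) * Real.exp (-(y ^ 2) / (2 * t)) +
          cs * (Real.exp (-(y ^ 2) / (2 * t)) - Real.exp (-(y ^ 2) / (2 * s)))) :=
        integral_mono hintLHS hintRHS hpt
    _ = (cs - ct) * Real.sqrt (2 * π * t) +
          cs * (Real.sqrt (2 * π * t) - Real.sqrt (2 * π * s)) := by
        have h1 : Integrable (fun y : ℝ => (cs - ct) * Real.exp (-(y ^ 2) / (2 * t))) :=
          hint_t.const_mul _
        have h2 : Integrable (fun y : ℝ =>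
            cs * (Real.exp (-(y ^ 2) / (2 * t)) - Real.exp (-(y ^ 2) / (2 * s)))) :=
          (hint_t.sub hint_s).const_mul _
        have h3 : Integrable (fun y : ℝ =>
            Real.exp (-(y ^ 2) / (2 * t)) - Real.exp (-(y ^ 2) / (2 * s))) :=
          hint_t.sub hint_s
        rw [integral_add h1 h2, integral_const_mul, integral_const_mul,
          integral_sub hint_t hint_s, gauss_integral ht, gauss_integral hs]
    _ = 2 * (Real.sqrt (2 * π * t) - Real.sqrt (2 * π * s)) / Real.sqrt (2 * π * s) := by
        rw [hcs', hct']
        field_simp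
        ring

/-- For every `α ∈ [0,1]` there is a constant `C = C(α)` such that for all `0 < s ≤ t`, `x ∈ ℝ`:
`∫ |g_t(x−y) − g_s(x−y)| dy ≤ C s^(−α/2) (t−s)^(α/2)`. -/
theorem heatKernel_time_holder_L1_bound (α : ℝ) (hα0 : 0 ≤ α) (hα1 : α ≤ 1) :
    ∃ C > (0 : ℝ), ∀ s t x : ℝ, 0 < s → s ≤ t →
      (∫ y : ℝ, |heatKernel t (x - y) - heatKernel s (x - y)|) ≤
        C * s ^ (-α / 2) * (t - s) ^ (α / 2) := by
  refine ⟨2, by norm_num, fun s t x hs hst => ?_⟩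
  have ht : 0 < t := hs.trans_le hst
  set r : ℝ := (t - s) / s with hr
  have hr0 : 0 ≤ r := div_nonneg (by linarith) hs.le
  -- rewrite the RHS as 2 * r ^ (α/2)
  have hRHS : 2 * s ^ (-α / 2) * (t - s) ^ (α / 2) = 2 * r ^ (α / 2) := by
    rw [hr, Real.div_rpow (by linarith) hs.le, show (-α / 2) = -(α / 2) by ring,
      Real.rpow_neg hs.le]
    ring
  rw [hRHS]
  -- change of variables
  have hchg : (∫ y : ℝ, |heatKernel t (x - y) - heatKernel s (x - y)|) =
      ∫ y : ℝ, |heatKernel t y - heatKernel s y| :=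
    integral_sub_left_eq_self (fun y => |heatKernel t y - heatKernel s y|) volume x
  rw [hchg]
  have hsqs : 0 < Real.sqrt (2 * π * s) := Real.sqrt_pos.2 (by positivity)
  have hsqt : 0 < Real.sqrt (2 * π * t) := Real.sqrt_pos.2 (by positivity)
  have hsq_s : Real.sqrt (2 * π * s) ^ 2 = 2 * π * s := Real.sq_sqrt (by positivity)
  have hsq_t : Real.sqrt (2 * π * t) ^ 2 = 2 * π * t := Real.sq_sqrt (by positivity)
  have hsqle : Real.sqrt (2 * π * s) ≤ Real.sqrt (2 * π * t) := by
    apply Real.sqrt_le_sqrt; nlinarith [pi_pos]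
  have hkey := hk_L1_diff hs hst
  -- `2(√(2πt)-√(2πs))/√(2πs) ≤ r`
  have hbound : 2 * (Real.sqrt (2 * π * t) - Real.sqrt (2 * π * s)) / Real.sqrt (2 * π * s)
      ≤ r := by
    rw [hr, div_le_div_iff₀ hsqs hs]
    nlinarith [pi_pos, sq_nonneg (Real.sqrt (2 * π * t) - Real.sqrt (2 * π * s))]
  have hLHSr : (∫ y : ℝ, |heatKernel t y - heatKernel s y|) ≤ r := hkey.trans hbound
  rcases le_or_gt r 1 with hr1 | hr1
  · -- r ≤ 1 : LHS ≤ r ≤ r^(α/2) ≤ 2 r^(α/2)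
    rcases eq_or_lt_of_le hr0 with hr0' | hr0'
    · have hRnn : 0 ≤ 2 * r ^ (α / 2) := by
        have := Real.rpow_nonneg hr0 (α / 2); linarith
      have := hr0'
      linarith [hLHSr]
    · have h1 : r ≤ r ^ (α / 2) := by
        calc r = r ^ (1 : ℝ) := (Real.rpow_one r).symm
          _ ≤ r ^ (α / 2) := Real.rpow_le_rpow_of_exponent_ge hr0' hr1 (by linarith)
      have h2 : 0 ≤ r ^ (α / 2) := Real.rpow_nonneg hr0 _
      linarith
  · -- r > 1 : LHS ≤ 2 ≤ 2 r^(α/2)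
    have hLHS2 : (∫ y : ℝ, |heatKernel t y - heatKernel s y|) ≤ 2 := by
      have hpt : ∀ y : ℝ, |heatKernel t y - heatKernel s y| ≤
          heatKernel t y + heatKernel s y := by
        intro y
        have h1 := hk_nonneg ht y
        have h2 := hk_nonneg hs y
        rw [abs_sub_le_iff]; constructor <;> linarith
      calc (∫ y : ℝ, |heatKernel t y - heatKernel s y|)
          ≤ ∫ y : ℝ, (heatKernel t y + heatKernel s y) :=
            integral_mono (((hk_integrable ht).sub (hk_integrable hs)).abs)
              ((hk_integrable ht).add (hk_integrable hs)) hpt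
        _ = 2 := by
            rw [integral_add (hk_integrable ht) (hk_integrable hs),
              hk_integral ht, hk_integral hs]; norm_num
    have h1 : (1 : ℝ) ≤ r ^ (α / 2) := Real.one_le_rpow hr1.le (by linarith)
    linarith
end
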